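/- arXiv:2203.12174 — 2 statements merged into one kernel-verified Lean document; each statement's English description precedes it below -/
import Mathlib

section
/- Let T : K → H be a relative Rota-Baxter operator with respect to a cocommutative left H-module bialgebra (K, ⇀). Define S_T(a) = S_H(T(a₁)) ⇀ S_K(a₂). Then T ∘ S_T = S_H ∘ T. -/
/-!
Relative Rota–Baxter operators on Hopf algebras (Li–Sheng–Tang).
`K` is a left `H`-module bialgebra via `act : H ⊗ K →ₗ K`, and
`T : K →ₗ H` is a coalgebra homomorphism satisfying the relative
Rota–Baxter identity `T(a)·T(b) = T(a₁·(T(a₂) ⇀ b))`.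
Sweedler sums are expressed by applying linear maps to `Coalgebra.comul`.
-/

open TensorProduct Coalgebra LinearMap HopfAlgebra

variable (R H K : Type*) [CommRing R] [Ring H] [HopfAlgebra R H]
  [Ring K] [HopfAlgebra R K]

/-- Cocommutativity of a coalgebra. -/
def IsCocomm (A : Type*) [AddCommGroup A] [Module R A] [Coalgebra R A] : Prop :=
  ∀ x : A, (TensorProduct.comm R A A) (Coalgebra.comul x) = Coalgebra.comul x

/-- `K` is a left `H`-module bialgebra via `act`: a module, a module algebra
and a module coalgebra. -/
structure IsModuleBialgebra (act : H ⊗[R] K →ₗ[R] K) : Prop where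
  /-- `1 ⇀ a = a` -/
  one_act : ∀ a : K, act ((1 : H) ⊗ₜ a) = a
  /-- `(x·y) ⇀ a = x ⇀ (y ⇀ a)` -/
  mul_act : ∀ (x y : H) (a : K), act ((x * y) ⊗ₜ a) = act (x ⊗ₜ act (y ⊗ₜ a))
  /-- `x ⇀ (a·b) = (x₁ ⇀ a)·(x₂ ⇀ b)` -/
  act_mul : ∀ (x : H) (a b : K),
    act (x ⊗ₜ (a * b))
      = LinearMap.mul' R K
          (TensorProduct.map (act ∘ₗ (TensorProduct.mk R H K).flip a)
            (act ∘ₗ (TensorProduct.mk R H K).flip b) (Coalgebra.comul x))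
  /-- `x ⇀ 1 = ε(x)·1` -/
  act_one : ∀ x : H, act (x ⊗ₜ (1 : K)) = Coalgebra.counit (R := R) x • (1 : K)
  /-- `act` is comultiplicative -/
  comul_act : Coalgebra.comul ∘ₗ act
      = TensorProduct.map act act ∘ₗ (Coalgebra.comul (R := R) (A := H ⊗[R] K))
  /-- `act` is counital -/
  counit_act : Coalgebra.counit ∘ₗ act = (Coalgebra.counit (R := R) (A := H ⊗[R] K))

/-- `T : K → H` is a coalgebra homomorphism. -/
structure IsCoalgHom (T : K →ₗ[R] H) : Prop where
  comul_comp : Coalgebra.comul ∘ₗ T = TensorProduct.map T T ∘ₗ Coalgebra.comul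
  counit_comp : Coalgebra.counit ∘ₗ T = (Coalgebra.counit (R := R) (A := K))

/-- The descendent product `a *_T b = a₁·(T(a₂) ⇀ b)` as a linear map. -/
noncomputable def descProd (act : H ⊗[R] K →ₗ[R] K) (T : K →ₗ[R] H) :
    K ⊗[R] K →ₗ[R] K :=
  LinearMap.mul' R K
    ∘ₗ TensorProduct.map LinearMap.id (act ∘ₗ TensorProduct.map T LinearMap.id)
    ∘ₗ (TensorProduct.assoc R K K K).toLinearMap
    ∘ₗ TensorProduct.map Coalgebra.comul LinearMap.id

/-- The relative Rota–Baxter identity `T(a)·T(b) = T(a₁·(T(a₂) ⇀ b))`. -/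
def IsRelRotaBaxter (act : H ⊗[R] K →ₗ[R] K) (T : K →ₗ[R] H) : Prop :=
  ∀ a b : K, T a * T b = T (descProd R H K act T (a ⊗ₜ b))

/-- `S_T(a) = S_H(T(a₁)) ⇀ S_K(a₂)`. -/
noncomputable def descAntipode (act : H ⊗[R] K →ₗ[R] K) (T : K →ₗ[R] H) :
    K →ₗ[R] K :=
  act ∘ₗ TensorProduct.map ((HopfAlgebra.antipode (R := R) (A := H)) ∘ₗ T)
          (HopfAlgebra.antipode (R := R) (A := K))
    ∘ₗ Coalgebra.comul

/-!
In the convolution algebra `Hom(K, H)`, `S_H ∘ T` is a left inverse of `T` because `T` is a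
coalgebra map. For the right inverse, the Rota–Baxter identity gives
`T(a₁)·T(S_T(a₂)) = T(a₁ ·_T S_T(a₂))`, and the module axioms together with
`T(a₁)·S_H(T(a₂)) = ε(a)1` collapse
`T(a₁) ⇀ S_T(a₂) = (T(a₁)·S_H(T(a₂))) ⇀ S_K(a₃)` to `S_K(a)`,
so that `a₁ ·_T S_T(a₂) = a₁·S_K(a₂) = ε(a)1`. As `T(1) = 1`, `T ∘ S_T` is a right inverse of `T`,
hence equal to `S_H ∘ T`.
-/

open WithConv

section ConvAction

variable {R A C M : Type*} [CommSemiring R] [Semiring A] [Algebra R A]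
  [AddCommMonoid C] [Module R C] [Coalgebra R C] [AddCommMonoid M] [Module R M]
  (act : A ⊗[R] M →ₗ[R] M)

lemma act_comp_map_convMul
    (hmul : ∀ (x y : A) (m : M), act ((x * y) ⊗ₜ m) = act (x ⊗ₜ act (y ⊗ₜ m)))
    (f g : C →ₗ[R] A) (h : C →ₗ[R] M) :
    act ∘ₗ map (toConv f * toConv g).ofConv h ∘ₗ comul
      = act ∘ₗ map f (act ∘ₗ map g h ∘ₗ comul) ∘ₗ comul := by
  have hassoc : act ∘ₗ map (mul' R A ∘ₗ map f g) h
      = act ∘ₗ map f (act ∘ₗ map g h) ∘ₗ (TensorProduct.assoc R C C C).toLinearMap := by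
    ext x y z
    simp [hmul]
  calc act ∘ₗ map (toConv f * toConv g).ofConv h ∘ₗ comul
      = act ∘ₗ (map (mul' R A ∘ₗ map f g) h ∘ₗ rTensor C comul) ∘ₗ comul := by
        rw [map_comp_rTensor]; rfl
    _ = act ∘ₗ map f (act ∘ₗ map g h) ∘ₗ lTensor C comul ∘ₗ comul := by
        rw [← coassoc, ← comp_assoc, ← comp_assoc, hassoc]; rfl
    _ = act ∘ₗ map f (act ∘ₗ map g h ∘ₗ comul) ∘ₗ comul := by
        rw [← comp_assoc comul (lTensor C comul), map_comp_lTensor]; rfl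

lemma act_comp_map_convOne (hone : ∀ m : M, act ((1 : A) ⊗ₜ m) = m) (h : C →ₗ[R] M) :
    act ∘ₗ map (1 : WithConv (C →ₗ[R] A)).ofConv h ∘ₗ comul = h := by
  rw [LinearMap.convOne_def, ofConv_toConv, ← map_comp_rTensor, comp_assoc,
    rTensor_counit_comp_comul]
  ext c
  simp [hone]

end ConvAction

namespace IsCoalgHom

variable {R H K} {T : K →ₗ[R] H}

def toCoalgHom (hT : IsCoalgHom R H K T) : K →ₗc[R] H where
  toLinearMap := T
  counit_comp := hT.counit_comp
  map_comp_comul := hT.comul_comp.symm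

lemma convMul_antipode_comp (hT : IsCoalgHom R H K T) :
    toConv T * toConv (antipode R ∘ₗ T) = 1 := by
  have h :=
    convMul_comp_coalgHom_distrib (toConv LinearMap.id) (toConv (antipode R)) hT.toCoalgHom
  rw [id_mul_antipode, convOne_comp_coalgHom] at h
  exact WithConv.ext h.symm

lemma antipode_comp_convMul (hT : IsCoalgHom R H K T) :
    toConv (antipode R ∘ₗ T) * toConv T = 1 := by
  have h :=
    convMul_comp_coalgHom_distrib (toConv (antipode R)) (toConv LinearMap.id) hT.toCoalgHom
  rw [antipode_mul_id, convOne_comp_coalgHom] at h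
  exact WithConv.ext h.symm

lemma isGroupLikeElem_map_one (hT : IsCoalgHom R H K T) : IsGroupLikeElem R (T 1) :=
  IsGroupLikeElem.one.map hT.toCoalgHom

end IsCoalgHom

section RelRotaBaxter

variable {R H K} (act : H ⊗[R] K →ₗ[R] K) (T : K →ₗ[R] H)

lemma descProd_comp_lTensor_comp_comul (S : K →ₗ[R] K) :
    descProd R H K act T ∘ₗ lTensor K S ∘ₗ comul
      = (toConv LinearMap.id * toConv (act ∘ₗ map T S ∘ₗ comul)).ofConv := by
  simp only [descProd, LinearMap.convMul_def, ofConv_toConv, coassoc_simps]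

lemma IsRelRotaBaxter.mul'_comp_map (hrb : IsRelRotaBaxter R H K act T) :
    mul' R H ∘ₗ map T T = T ∘ₗ descProd R H K act T :=
  TensorProduct.ext' fun a b => by simpa using hrb a b

lemma IsRelRotaBaxter.map_one (hmb : IsModuleBialgebra R H K act) (hT : IsCoalgHom R H K T)
    (hrb : IsRelRotaBaxter R H K act T) : T 1 = 1 := by
  have hgrp := hT.isGroupLikeElem_map_one
  have hidem : IsIdempotentElem (T 1) := by
    show T 1 * T 1 = T 1
    have h := hrb 1 1
    simpa [descProd, Algebra.TensorProduct.one_def, hmb.act_one, hgrp.counit_eq_one] using h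
  exact (IsIdempotentElem.iff_eq_one_of_isUnit hgrp.isUnit).mp hidem

lemma act_comp_map_descAntipode (hmb : IsModuleBialgebra R H K act) (hT : IsCoalgHom R H K T) :
    act ∘ₗ map T (descAntipode R H K act T) ∘ₗ comul = antipode R := by
  rw [descAntipode, ← act_comp_map_convMul act hmb.mul_act, hT.convMul_antipode_comp,
    act_comp_map_convOne act hmb.one_act]

lemma descProd_comp_lTensor_descAntipode_comp_comul (hmb : IsModuleBialgebra R H K act)
    (hT : IsCoalgHom R H K T) :
    descProd R H K act T ∘ₗ lTensor K (descAntipode R H K act T) ∘ₗ comul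
      = (1 : WithConv (K →ₗ[R] K)).ofConv := by
  rw [descProd_comp_lTensor_comp_comul, act_comp_map_descAntipode act T hmb hT, id_mul_antipode]

lemma convMul_comp_descAntipode (hmb : IsModuleBialgebra R H K act) (hT : IsCoalgHom R H K T)
    (hrb : IsRelRotaBaxter R H K act T) :
    toConv T * toConv (T ∘ₗ descAntipode R H K act T) = 1 := by
  ext a
  calc (toConv T * toConv (T ∘ₗ descAntipode R H K act T)) a
      = (mul' R H ∘ₗ map T T ∘ₗ lTensor K (descAntipode R H K act T) ∘ₗ comul) a := by
        rw [← comp_assoc comul, map_comp_lTensor]; rfl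
    _ = T ((1 : WithConv (K →ₗ[R] K)) a) := by
        rw [← comp_assoc _ (map T T), hrb.mul'_comp_map, comp_assoc,
          descProd_comp_lTensor_descAntipode_comp_comul act T hmb hT]; rfl
    _ = (1 : WithConv (K →ₗ[R] H)) a := by
        simp only [LinearMap.convOne_apply, Algebra.algebraMap_eq_smul_one, map_smul,
          hrb.map_one act T hmb hT]

end RelRotaBaxter

theorem T_descAntipode (act : H ⊗[R] K →ₗ[R] K) (T : K →ₗ[R] H)
    (hmb : IsModuleBialgebra R H K act) (hT : IsCoalgHom R H K T)
    (hrb : IsRelRotaBaxter R H K act T) :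
    T ∘ₗ descAntipode R H K act T
      = (HopfAlgebra.antipode (R := R) (A := H)) ∘ₗ T :=
  congrArg ofConv <| Eq.symm <|
    left_inv_eq_right_inv hT.antipode_comp_convMul (convMul_comp_descAntipode act T hmb hT hrb)
end

section
/- Let H and K be cocommutative Hopf algebras with K a left H-module bialgebra via ⇀, and let T : K → H be a coalgebra homomorphism. If the graph Gr_T = {a₁ ⊗ T(a₂) : a ∈ K} is a subalgebra of the smash product Hopf algebra K ⋊ H, then T is a relative Rota-Baxter operator, i.e., T(a)T(b) = T(a₁(T(a₂) ⇀ b)) for all a, b ∈ K. -/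
/-!
Relative Rota–Baxter operators on Hopf algebras (Li–Sheng–Tang).
`K` is a left `H`-module bialgebra via `act : H ⊗ K →ₗ K`, and
`T : K →ₗ H` is a coalgebra homomorphism satisfying the relative
Rota–Baxter identity `T(a)·T(b) = T(a₁·(T(a₂) ⇀ b))`.
Sweedler sums are expressed by applying linear maps to `Coalgebra.comul`.
-/

open TensorProduct Coalgebra LinearMap HopfAlgebra

variable (R H K : Type*) [CommRing R] [Ring H] [HopfAlgebra R H]
  [Ring K] [HopfAlgebra R K]

/-- The multiplication of the smash product `K ⋊ H`:
`(a # x)(b # y) = a·(x₁ ⇀ b) # x₂·y`. -/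
noncomputable def smashMul (act : H ⊗[R] K →ₗ[R] K) :
    (K ⊗[R] H) ⊗[R] (K ⊗[R] H) →ₗ[R] K ⊗[R] H :=
  TensorProduct.map (LinearMap.mul' R K) LinearMap.id
    ∘ₗ (TensorProduct.assoc R K K H).symm.toLinearMap
    ∘ₗ TensorProduct.map LinearMap.id
        (TensorProduct.map act (LinearMap.mul' R H)
          ∘ₗ (TensorProduct.tensorTensorTensorComm R H H K H).toLinearMap)
    ∘ₗ (TensorProduct.assoc R K (H ⊗[R] H) (K ⊗[R] H)).toLinearMap
    ∘ₗ TensorProduct.map (TensorProduct.map LinearMap.id Coalgebra.comul)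
        LinearMap.id

/-- The graph embedding `a ↦ a₁ ⊗ T(a₂)` of `K` into `K ⊗ H`, whose image is
the graph `Gr_T = {a₁ ⊗ T(a₂) : a ∈ K}`. -/
noncomputable def graphEmb (T : K →ₗ[R] H) : K →ₗ[R] K ⊗[R] H :=
  TensorProduct.map LinearMap.id T ∘ₗ Coalgebra.comul

/-!
Apply the two counit projections `id ⊗ ε : K ⊗ H → K` and `ε ⊗ id : K ⊗ H → H` to the closure
identity `(a₁ # T(a₂))(b₁ # T(b₂)) = w₁ # T(w₂)`. Since `ε ∘ T = ε`, they send the graph element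
`w₁ # T(w₂)` to `w` and `T(w)`. On the product, `id ⊗ ε` leaves `a₁(T(a₂) ⇀ b)` because `ε` is
multiplicative on `H`, and `ε ⊗ id` leaves `T(a)T(b)` because `ε(x ⇀ c) = ε(x)ε(c)`.
-/

namespace Coalgebra

lemma sum_counit_right_smul {S A ι : Type*} [CommSemiring S] [AddCommMonoid A] [Module S A]
    [Coalgebra S A] {a : A} (𝓡 : Repr S a ι) :
    ∑ i ∈ 𝓡.index, counit (R := S) (𝓡.right i) • 𝓡.left i = a := by
  simpa only [map_sum, _root_.TensorProduct.rid_tmul, one_smul]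
    using congrArg (_root_.TensorProduct.rid S A) (sum_tmul_counit_eq 𝓡)

end Coalgebra

section

variable {R H K}

lemma graphEmb_eq_sum (T : K →ₗ[R] H) {a : K} {ι : Type*} (𝓡 : Coalgebra.Repr R a ι) :
    graphEmb R H K T a = ∑ i ∈ 𝓡.index, 𝓡.left i ⊗ₜ[R] T (𝓡.right i) := by
  simp [graphEmb, ← 𝓡.eq, map_sum]

lemma descProd_tmul_eq_sum (act : H ⊗[R] K →ₗ[R] K) (T : K →ₗ[R] H) {a : K} (b : K) {ι : Type*}
    (𝓡 : Coalgebra.Repr R a ι) :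
    descProd R H K act T (a ⊗ₜ b) = ∑ i ∈ 𝓡.index, 𝓡.left i * act (T (𝓡.right i) ⊗ₜ b) := by
  simp [descProd, ← 𝓡.eq, TensorProduct.sum_tmul, map_sum]

lemma smashMul_tmul_eq_sum (act : H ⊗[R] K →ₗ[R] K) (a b : K) (x y : H) {ι : Type*}
    (𝓡 : Coalgebra.Repr R x ι) :
    smashMul R H K act ((a ⊗ₜ x) ⊗ₜ (b ⊗ₜ y))
      = ∑ i ∈ 𝓡.index, (a * act (𝓡.left i ⊗ₜ b)) ⊗ₜ[R] (𝓡.right i * y) := by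
  simp only [smashMul, LinearMap.coe_comp, Function.comp_apply, TensorProduct.map_tmul,
    LinearMap.id_coe, id_eq, ← 𝓡.eq]
  simp [TensorProduct.sum_tmul, TensorProduct.tmul_sum, map_sum,
    TensorProduct.tensorTensorTensorComm_tmul, LinearMap.mul'_apply]

lemma rid_lTensor_counit_graphEmb {T : K →ₗ[R] H} (hT : counit ∘ₗ T = counit) (a : K) :
    TensorProduct.rid R K (counit.lTensor K (graphEmb R H K T a)) = a := by
  rw [graphEmb, LinearMap.comp_apply, LinearMap.lTensor_map, hT]
  change TensorProduct.rid R K (counit.lTensor K (comul a)) = a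
  simp

lemma lid_rTensor_counit_graphEmb (T : K →ₗ[R] H) (a : K) :
    TensorProduct.lid R H (counit.rTensor H (graphEmb R H K T a)) = T a := by
  rw [graphEmb, LinearMap.comp_apply, LinearMap.rTensor_map, LinearMap.comp_id,
    ← LinearMap.id_comp counit, ← LinearMap.map_rTensor]
  change TensorProduct.lid R H (T.lTensor R (counit.rTensor K (comul a))) = T a
  simp

lemma rid_lTensor_counit_smashMul_tmul (act : H ⊗[R] K →ₗ[R] K) (a b : K) (x y : H) :
    TensorProduct.rid R K (counit.lTensor K (smashMul R H K act ((a ⊗ₜ x) ⊗ₜ (b ⊗ₜ y))))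
      = counit (R := R) y • (a * act (x ⊗ₜ b)) := by
  conv_rhs => rw [← sum_counit_right_smul (ℛ R x)]
  simp [smashMul_tmul_eq_sum _ _ _ _ _ (ℛ R x), map_sum, TensorProduct.sum_tmul, Finset.mul_sum,
    Finset.smul_sum, ← TensorProduct.smul_tmul', smul_smul, mul_comm]

lemma lid_rTensor_counit_smashMul_tmul {act : H ⊗[R] K →ₗ[R] K}
    (hact : counit ∘ₗ act = counit) (a b : K) (x y : H) :
    TensorProduct.lid R H (counit.rTensor H (smashMul R H K act ((a ⊗ₜ x) ⊗ₜ (b ⊗ₜ y))))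
      = (counit (R := R) a * counit (R := R) b) • (x * y) := by
  have hε (h : H) (c : K) : counit (R := R) (act (h ⊗ₜ c)) = counit h * counit c := by
    rw [mul_comm]; simpa using congr($hact (h ⊗ₜ c))
  conv_rhs => rw [← sum_counit_smul (ℛ R x)]
  simp [smashMul_tmul_eq_sum _ _ _ _ _ (ℛ R x), map_sum, hε, Finset.sum_mul, Finset.smul_sum,
    smul_smul, mul_comm, mul_left_comm]

lemma rid_lTensor_counit_smashMul_graphEmb (act : H ⊗[R] K →ₗ[R] K) {T : K →ₗ[R] H}
    (hT : counit ∘ₗ T = counit) (a b : K) :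
    TensorProduct.rid R K (counit.lTensor K
        (smashMul R H K act (graphEmb R H K T a ⊗ₜ graphEmb R H K T b)))
      = descProd R H K act T (a ⊗ₜ b) := by
  have hεT (c : K) : counit (R := R) (T c) = counit c := congr($hT c)
  rw [descProd_tmul_eq_sum act T b (ℛ R a)]
  conv_rhs => rw [← sum_counit_right_smul (ℛ R b)]
  simp [graphEmb_eq_sum T (ℛ R a), graphEmb_eq_sum T (ℛ R b), TensorProduct.sum_tmul,
    TensorProduct.tmul_sum, map_sum, rid_lTensor_counit_smashMul_tmul, hεT, Finset.mul_sum]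
  exact Finset.sum_comm

lemma lid_rTensor_counit_smashMul_graphEmb {act : H ⊗[R] K →ₗ[R] K}
    (hact : counit ∘ₗ act = counit) (T : K →ₗ[R] H) (a b : K) :
    TensorProduct.lid R H (counit.rTensor H
        (smashMul R H K act (graphEmb R H K T a ⊗ₜ graphEmb R H K T b)))
      = T a * T b := by
  conv_rhs => rw [← sum_counit_smul (ℛ R a), ← sum_counit_smul (ℛ R b)]
  simp [graphEmb_eq_sum T (ℛ R a), graphEmb_eq_sum T (ℛ R b), TensorProduct.sum_tmul,
    TensorProduct.tmul_sum, map_sum, lid_rTensor_counit_smashMul_tmul hact, Finset.sum_mul_sum]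
  rw [Finset.sum_comm]
  simp [smul_smul, mul_comm]

end

theorem graph_subalgebra_to_relRotaBaxter (act : H ⊗[R] K →ₗ[R] K)
    (T : K →ₗ[R] H) (hmb : IsModuleBialgebra R H K act)
    (hT : IsCoalgHom R H K T)
    (hgr : ∀ a b : K, ∃ w : K,
      smashMul R H K act (graphEmb R H K T a ⊗ₜ graphEmb R H K T b)
        = graphEmb R H K T w) :
    IsRelRotaBaxter R H K act T := by
  intro a b
  obtain ⟨w, hw⟩ := hgr a b
  have hK : descProd R H K act T (a ⊗ₜ b) = w := by
    rw [← rid_lTensor_counit_smashMul_graphEmb act hT.counit_comp, hw,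
      rid_lTensor_counit_graphEmb hT.counit_comp]
  have hH : T a * T b = T w := by
    rw [← lid_rTensor_counit_smashMul_graphEmb hmb.counit_act, hw, lid_rTensor_counit_graphEmb]
  rw [hH, hK]
end
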